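/- Let (c_n) be a bounded real sequence and λ < 0. Define λ̃(c, λ) = ln(Σ_{n=0}^∞ e^{c_n + n·λ}). Then λ̃(c, λ) equals the maximum over all probability sequences (t_n) with Σ_{n=0}^∞ n·t_n < ∞ of Σ_{n=0}^∞ c_n·t_n + λ·Σ_{n=0}^∞ n·t_n − Σ_{n=0}^∞ t_n ln t_n. -/

import Mathlib

/-!
Gibbs variational principle. With weights `a n = exp (c n + n λ)`, which are summable because
`c` is bounded and `exp λ < 1`, and `Z = ∑ a n`, the functional equals
`∑ t n log (a n / Z) - ∑ t n log (t n) + log Z`, and `t log (b / t) ≤ b - t` shows that the first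
two terms sum to at most `∑ (a n / Z - t n) = 0`, with equality for the Gibbs distribution
`t = a / Z`. A finite first moment makes the entropy series converge, since `-t log t` is at
most `n t` when `t ≥ exp (-n)` and at most `2 √t ≤ 2 exp (-n / 2)` otherwise.
-/

open Real

lemma mul_log_sub_mul_log_le {t b : ℝ} (ht : 0 ≤ t) (hb : 0 < b) :
    t * log b - t * log t ≤ b - t := by
  rcases ht.eq_or_lt with rfl | ht
  · simpa using hb.le
  calc t * log b - t * log t = t * log (b / t) := by
        rw [log_div hb.ne' ht.ne']; ring
    _ ≤ t * (b / t - 1) := mul_le_mul_of_nonneg_left (log_le_sub_one_of_pos (by positivity)) ht.le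
    _ = b - t := by field_simp

theorem tsum_mul_log_sub_tsum_mul_log_le_log_tsum {ι : Type*} {a t : ι → ℝ}
    (ha : ∀ i, 0 < a i) (hsa : Summable a) (ht0 : ∀ i, 0 ≤ t i) (ht : HasSum t 1)
    (hta : Summable fun i => t i * log (a i)) (htt : Summable fun i => t i * log (t i)) :
    ∑' i, t i * log (a i) - ∑' i, t i * log (t i) ≤ log (∑' i, a i) := by
  obtain ⟨i₀⟩ : Nonempty ι := by
    by_contra h
    rw [not_nonempty_iff] at h
    exact one_ne_zero (ht.unique hasSum_empty)
  set Z := ∑' i, a i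
  have hZ : 0 < Z := hsa.tsum_pos (fun i => (ha i).le) i₀ (ha i₀)
  have key : ∀ i, t i * log (a i) - t i * log (t i) - log Z * t i ≤ a i / Z - t i := by
    intro i
    have := mul_log_sub_mul_log_le (ht0 i) (div_pos (ha i) hZ)
    rw [log_div (ha i).ne' hZ.ne'] at this
    linarith
  have hle := Summable.tsum_le_tsum key ((hta.sub htt).sub (ht.summable.mul_left _))
    ((hsa.div_const Z).sub ht.summable)
  rw [(hta.sub htt).tsum_sub (ht.summable.mul_left _), hta.tsum_sub htt, tsum_mul_left,
    (hsa.div_const Z).tsum_sub ht.summable, tsum_div_const, ht.tsum_eq, div_self hZ.ne'] at hle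
  linarith

theorem tsum_div_mul_log_sub_tsum_div_mul_log_div {ι : Type*} [Nonempty ι] {a : ι → ℝ} {Z : ℝ}
    (ha : ∀ i, 0 < a i) (hZ : HasSum a Z) (haa : Summable fun i => a i * log (a i)) :
    ∑' i, a i / Z * log (a i) - ∑' i, a i / Z * log (a i / Z) = log Z := by
  have hZ0 : 0 < Z :=
    hZ.tsum_eq ▸ hZ.summable.tsum_pos (fun i => (ha i).le) (Classical.arbitrary ι) (ha _)
  have hsum : Summable fun i => a i / Z * log (a i) :=
    (haa.div_const Z).congr fun i => by ring
  have hsplit : ∀ i, a i / Z * log (a i / Z) = a i / Z * log (a i) - log Z * (a i / Z) :=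
    fun i => by rw [log_div (ha i).ne' hZ0.ne']; ring
  simp only [hsplit]
  rw [hsum.tsum_sub ((hZ.div_const Z).summable.mul_left _), tsum_mul_left,
    (hZ.div_const Z).tsum_eq, div_self hZ0.ne']
  ring

lemma neg_mul_log_le_two_mul_sqrt {t : ℝ} (ht : 0 ≤ t) : -(t * log t) ≤ 2 * √t := by
  rcases ht.eq_or_lt with rfl | ht
  · simp
  have hs : 0 < √t := sqrt_pos.2 ht
  calc -(t * log t) = 2 * t * log (√t)⁻¹ := by
        rw [log_inv, log_sqrt ht.le]; ring
    _ ≤ 2 * t * ((√t)⁻¹ - 1) :=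
        mul_le_mul_of_nonneg_left (log_le_sub_one_of_pos (inv_pos.2 hs)) (by positivity)
    _ ≤ 2 * t * (√t)⁻¹ := by gcongr; linarith
    _ = 2 * √t := by rw [mul_assoc, ← div_eq_mul_inv, div_sqrt]

lemma neg_mul_log_le_nat_mul_add {t : ℝ} (ht : 0 ≤ t) (n : ℕ) :
    -(t * log t) ≤ n * t + 2 * exp (-n / 2) := by
  rcases le_or_gt (exp (-n)) t with hbig | hsmall
  · have hlog : -(n : ℝ) ≤ log t := (le_log_iff_exp_le ((exp_pos _).trans_le hbig)).2 hbig
    nlinarith [exp_pos (-n / 2)]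
  · have hsqrt : √t ≤ exp (-n / 2) := by
      rw [exp_half]; exact sqrt_le_sqrt hsmall.le
    nlinarith [neg_mul_log_le_two_mul_sqrt ht, mul_nonneg (Nat.cast_nonneg (α := ℝ) n) ht]

lemma summable_mul_log_of_summable_nat_mul {t : ℕ → ℝ} (h0 : ∀ n, 0 ≤ t n) (h1 : ∀ n, t n ≤ 1)
    (hm : Summable fun n : ℕ => (n : ℝ) * t n) : Summable fun n => t n * log (t n) := by
  have hexp : Summable fun n : ℕ => exp (-n / 2) :=
    (summable_exp_nat_mul_iff.2 (by norm_num : (-1 / 2 : ℝ) < 0)).congr fun n => by ring_nf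
  refine Summable.of_neg <| (hm.add (hexp.mul_left 2)).of_nonneg_of_le (fun n => ?_)
    (fun n => neg_mul_log_le_nat_mul_add (h0 n) n)
  exact neg_nonneg.2 (mul_nonpos_of_nonneg_of_nonpos (h0 n) (log_nonpos (h0 n) (h1 n)))

lemma summable_mul_of_abs_le {ι : Type*} {c t : ι → ℝ} {M : ℝ} (hc : ∀ i, |c i| ≤ M)
    (ht : Summable t) : Summable fun i => c i * t i :=
  Summable.of_norm_bounded (ht.abs.mul_left M) fun i => by
    rw [norm_mul, norm_eq_abs, norm_eq_abs]
    exact mul_le_mul_of_nonneg_right (hc i) (abs_nonneg _)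

lemma summable_pow_mul_exp_add_mul {c : ℕ → ℝ} {M : ℝ} (hc : ∀ n, |c n| ≤ M) {lam : ℝ}
    (hlam : lam < 0) (k : ℕ) : Summable fun n : ℕ => (n : ℝ) ^ k * exp (c n + n * lam) := by
  have hr : ‖exp lam‖ < 1 := by
    rw [norm_of_nonneg (exp_nonneg _)]; exact exp_lt_one_iff.2 hlam
  refine ((summable_pow_mul_geometric_of_norm_lt_one k hr).mul_left (exp M)).of_nonneg_of_le
    (fun n => by positivity) fun n => ?_
  calc (n : ℝ) ^ k * exp (c n + n * lam) ≤ (n : ℝ) ^ k * exp (M + n * lam) := by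
        gcongr; exact (abs_le.1 (hc n)).2
    _ = exp M * ((n : ℝ) ^ k * exp lam ^ n) := by
        rw [exp_add, exp_nat_mul]; ring

lemma hasSum_mul_add_nat_mul {c t : ℕ → ℝ} {M : ℝ} (hc : ∀ n, |c n| ≤ M) (lam : ℝ)
    (ht : Summable t) (hnt : Summable fun n : ℕ => (n : ℝ) * t n) :
    HasSum (fun n => t n * (c n + n * lam))
      (∑' n, c n * t n + lam * ∑' n : ℕ, (n : ℝ) * t n) := by
  convert (summable_mul_of_abs_le hc ht).hasSum.add (hnt.hasSum.mul_left lam) using 1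
  funext n; ring

/-- For a bounded real sequence `c` and `λ < 0`,
`ln(Σ e^{c_n + nλ})` is the maximum, over probability sequences `t` with finite first
moment, of `Σ c_n t_n + λ·Σ n t_n − Σ t_n ln t_n`. -/
theorem stmt16 (c : ℕ → ℝ) (hc : ∃ M, ∀ n, |c n| ≤ M)
    (lam : ℝ) (hlam : lam < 0) :
    IsGreatest
      {x : ℝ | ∃ t : ℕ → ℝ, (∀ n, 0 ≤ t n) ∧ HasSum t 1 ∧
        Summable (fun n : ℕ => (n : ℝ) * t n) ∧
        x = ∑' n, c n * t n + lam * ∑' n : ℕ, (n : ℝ) * t n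
            - ∑' n, t n * Real.log (t n)}
      (Real.log (∑' n : ℕ, Real.exp (c n + n * lam))) := by
  obtain ⟨M, hM⟩ := hc
  set a : ℕ → ℝ := fun n => exp (c n + n * lam)
  have ha : ∀ n, 0 < a n := fun n => exp_pos _
  have hsa : Summable a := by simpa using summable_pow_mul_exp_add_mul hM hlam 0
  have hsna : Summable fun n : ℕ => (n : ℝ) * a n := by
    simpa using summable_pow_mul_exp_add_mul hM hlam 1
  have hvalue : ∀ t : ℕ → ℝ, Summable t → Summable (fun n : ℕ => (n : ℝ) * t n) →
      HasSum (fun n => t n * log (a n)) (∑' n, c n * t n + lam * ∑' n : ℕ, (n : ℝ) * t n) :=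
    fun t ht hnt => by simpa only [a, log_exp] using hasSum_mul_add_nat_mul hM lam ht hnt
  set Z := ∑' n, a n
  have hZ : 0 < Z := hsa.tsum_pos (fun n => (ha n).le) 0 (ha 0)
  have hsnaZ : Summable fun n : ℕ => (n : ℝ) * (a n / Z) :=
    (hsna.div_const Z).congr fun n => by ring
  refine ⟨⟨fun n => a n / Z, fun n => (div_pos (ha n) hZ).le, ?_, hsnaZ, ?_⟩, ?_⟩
  · have h := hsa.hasSum.div_const Z
    rwa [div_self hZ.ne'] at h
  · rw [← (hvalue _ (hsa.div_const Z) hsnaZ).tsum_eq,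
      tsum_div_mul_log_sub_tsum_div_mul_log_div ha hsa.hasSum (hvalue a hsa hsna).summable]
  · rintro x ⟨t, ht0, ht, hnt, rfl⟩
    have ht1 : ∀ n, t n ≤ 1 := fun n => le_hasSum ht n fun m _ => ht0 m
    rw [← (hvalue t ht.summable hnt).tsum_eq]
    exact tsum_mul_log_sub_tsum_mul_log_le_log_tsum ha hsa ht0 ht
      (hvalue t ht.summable hnt).summable (summable_mul_log_of_summable_nat_mul ht0 ht1 hnt)
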